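/- arXiv:1105.2995 — 2 statements merged into one kernel-verified Lean document; each statement's English description precedes it below -/
import Mathlib

section
/- Let a ≤ 0 and g : ℝ → ℝ be differentiable with g(0) = 0 and g' ∈ L². Then for t ∈ ℝ, the derivative in t of ∫_0^t e^{a|t-x|} g(x) dx equals ∫_0^t e^{a|t-x|} g'(x) dx. -/
/-!
On either side of `0` the sign of `s - x` is constant for `x` between `0` and `s`, so the integral
is `e^{bs} ∫_0^s e^{-bx} g(x) dx` with `b = ±a`. The product rule and the fundamental theorem of
calculus differentiate this, and integrating `∫_0^s e^{b(s-x)} g'(x) dx` by parts gives the same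
value because the boundary term at `0` is `g 0 = 0`. The two one-sided formulas agree at `0`.
-/

open MeasureTheory Set Real

theorem MeasureTheory.MemLp.intervalIntegrable {E : Type*} [NormedAddCommGroup E] {f : ℝ → E}
    {p : ENNReal} (hf : MemLp f p volume) (hp : 1 ≤ p) (u v : ℝ) :
    IntervalIntegrable f volume u v :=
  ((hf.locallyIntegrable hp).integrableOn_isCompact isCompact_uIcc).intervalIntegrable

theorem hasDerivAt_of_eqOn_Iic_of_eqOn_Ici {F : Type*} [NormedAddCommGroup F] [NormedSpace ℝ F]
    {f f₁ f₂ : ℝ → F} {f' : ℝ → F} {c : ℝ}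
    (h₁ : ∀ s ≤ c, HasDerivAt f₁ (f' s) s) (h₂ : ∀ s ≥ c, HasDerivAt f₂ (f' s) s)
    (hf₁ : EqOn f f₁ (Iic c)) (hf₂ : EqOn f f₂ (Ici c)) (t : ℝ) : HasDerivAt f (f' t) t := by
  rcases lt_trichotomy t c with ht | rfl | ht
  · exact (h₁ t ht.le).congr_of_eventuallyEq (Filter.eventuallyEq_of_mem (Iic_mem_nhds ht) hf₁)
  · have hIic := (h₁ t le_rfl).hasDerivWithinAt.congr hf₁ (hf₁ self_mem_Iic)
    have hIci := (h₂ t le_rfl).hasDerivWithinAt.congr hf₂ (hf₂ self_mem_Ici)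
    simpa using hIic.union hIci
  · exact (h₂ t ht.le).congr_of_eventuallyEq (Filter.eventuallyEq_of_mem (Ici_mem_nhds ht) hf₂)

theorem integral_exp_mul_mul_deriv {g : ℝ → ℝ} {u v : ℝ} (hg : Differentiable ℝ g)
    (hg' : IntervalIntegrable (deriv g) volume u v) (b : ℝ) :
    ∫ x in u..v, exp (b * x) * deriv g x
      = exp (b * v) * g v - exp (b * u) * g u - b * ∫ x in u..v, exp (b * x) * g x := by
  have hexp : ∀ x : ℝ, HasDerivAt (fun x ↦ exp (b * x)) (b * exp (b * x)) x := fun x ↦ by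
    simpa [mul_comm] using ((hasDerivAt_id x).const_mul b).exp
  rw [intervalIntegral.integral_mul_deriv_eq_deriv_mul (fun x _ ↦ hexp x)
    (fun x _ ↦ (hg x).hasDerivAt) ((by fun_prop : Continuous _).intervalIntegrable _ _) hg',
    ← intervalIntegral.integral_const_mul]
  simp only [mul_assoc]

theorem hasDerivAt_integral_exp_mul_sub_mul {g : ℝ → ℝ} (hg : Differentiable ℝ g)
    (hg0 : g 0 = 0) (hg' : ∀ u v, IntervalIntegrable (deriv g) volume u v) (b s : ℝ) :
    HasDerivAt (fun s ↦ ∫ x in 0..s, exp (b * (s - x)) * g x)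
      (∫ x in 0..s, exp (b * (s - x)) * deriv g x) s := by
  have hfactor : ∀ (f : ℝ → ℝ) (s : ℝ), ∫ x in 0..s, exp (b * (s - x)) * f x
      = exp (b * s) * ∫ x in 0..s, exp (-b * x) * f x := fun f s ↦ by
    rw [← intervalIntegral.integral_const_mul]
    congr 1 with x
    rw [← mul_assoc, ← exp_add]
    ring_nf
  have hprim : HasDerivAt (fun s ↦ ∫ x in 0..s, exp (-b * x) * g x) (exp (-b * s) * g s) s :=
    ((by fun_prop : Continuous fun x ↦ exp (-b * x)).mul hg.continuous).integral_hasStrictDerivAt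
      0 s |>.hasDerivAt
  have hexp : HasDerivAt (fun s ↦ exp (b * s)) (b * exp (b * s)) s := by
    simpa [mul_comm] using ((hasDerivAt_id s).const_mul b).exp
  simp_rw [hfactor]
  refine (hexp.mul hprim).congr_deriv ?_
  rw [integral_exp_mul_mul_deriv hg (hg' 0 s), hg0]
  ring

theorem integral_exp_mul_abs_sub_of_nonneg (f : ℝ → ℝ) (a : ℝ) {s : ℝ} (hs : 0 ≤ s) :
    ∫ x in 0..s, exp (a * |s - x|) * f x = ∫ x in 0..s, exp (a * (s - x)) * f x := by
  refine intervalIntegral.integral_congr fun x hx ↦ ?_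
  rw [uIcc_of_le hs] at hx
  rw [abs_of_nonneg (sub_nonneg.2 hx.2)]

theorem integral_exp_mul_abs_sub_of_nonpos (f : ℝ → ℝ) (a : ℝ) {s : ℝ} (hs : s ≤ 0) :
    ∫ x in 0..s, exp (a * |s - x|) * f x = ∫ x in 0..s, exp (-a * (s - x)) * f x := by
  refine intervalIntegral.integral_congr fun x hx ↦ ?_
  rw [uIcc_of_ge hs] at hx
  rw [abs_of_nonpos (sub_nonpos.2 hx.1), neg_mul_comm]

theorem stmt1_general (a : ℝ) (g : ℝ → ℝ) (hg : Differentiable ℝ g)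
    (hg0 : g 0 = 0) (hg' : MemLp (deriv g) 2 (volume : Measure ℝ)) (t : ℝ) :
    HasDerivAt (fun s : ℝ => ∫ x in (0:ℝ)..s, Real.exp (a * |s - x|) * g x)
      (∫ x in (0:ℝ)..t, Real.exp (a * |t - x|) * deriv g x) t := by
  have hg'int := hg'.intervalIntegrable one_le_two
  refine hasDerivAt_of_eqOn_Iic_of_eqOn_Ici (c := 0)
    (f' := fun s ↦ ∫ x in (0:ℝ)..s, exp (a * |s - x|) * deriv g x) (fun s hs ↦ ?_)
    (fun s hs ↦ ?_) (fun s hs ↦ integral_exp_mul_abs_sub_of_nonpos g a hs)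
    (fun s hs ↦ integral_exp_mul_abs_sub_of_nonneg g a hs) t
  · rw [integral_exp_mul_abs_sub_of_nonpos _ a hs]
    exact hasDerivAt_integral_exp_mul_sub_mul hg hg0 hg'int (-a) s
  · rw [integral_exp_mul_abs_sub_of_nonneg _ a hs]
    exact hasDerivAt_integral_exp_mul_sub_mul hg hg0 hg'int a s

/-- For `a ≤ 0` and `g : ℝ → ℝ` differentiable with `g 0 = 0` and
`g' ∈ L²`, the derivative in `t` of `∫_0^t e^{a|t-x|} g(x) dx` equals
`∫_0^t e^{a|t-x|} g'(x) dx`. -/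
theorem stmt1 (a : ℝ) (ha : a ≤ 0) (g : ℝ → ℝ) (hg : Differentiable ℝ g)
    (hg0 : g 0 = 0) (hg' : MemLp (deriv g) 2 (volume : Measure ℝ)) (t : ℝ) :
    HasDerivAt (fun s : ℝ => ∫ x in (0:ℝ)..s, Real.exp (a * |s - x|) * g x)
      (∫ x in (0:ℝ)..t, Real.exp (a * |t - x|) * deriv g x) t :=
  stmt1_general a g hg hg0 hg' t
end

section
/- Let T, β > 0 with T ≥ √2/√β, and define the kernel N_T(τ,t') = (|τ|^{1/2}/|t'|^{3/2})·|K₂(T,τ,t')|·χ_{{1/T < |t'| ≤ β|τ|T}} on the region |τ| > 1/2, where |K₂(T,τ,t')| ≤ C·min{|t'|/|τ|, |t'|²/|τ|²}. Then sup_τ ∫_ℝ |N_T(τ,t')| dt' ≤ C·β^{1/2}·T^{1/2} and sup_{t'} ∫_{|τ|>1/2} |N_T(τ,t')| dτ ≤ C·β^{1/2}·T^{1/2}. -/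
open MeasureTheory Set ENNReal

/-! On the support of `N_T`, the bound `|K₂| ≤ C |t'|/|τ|` gives
`N_T ≤ C |τ|^{-1/2} |t'|^{-1/2}` with `|t'| ≤ β|τ|T`, whose `t'`-integral is
`4C (β|τ|T)^{1/2} |τ|^{-1/2} = 4C β^{1/2} T^{1/2}`. The bound `|K₂| ≤ C |t'|²/|τ|²` gives
`N_T ≤ C |t'|^{1/2} |τ|^{-3/2}` with `|τ| ≥ |t'|/(βT)`, whose `τ`-integral is
`4C |t'|^{1/2} (|t'|/(βT))^{-1/2} = 4C β^{1/2} T^{1/2}`. -/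

lemma lintegral_comp_abs (f : ℝ → ℝ≥0∞) :
    ∫⁻ x, f |x| = 2 * ∫⁻ x in Ioi 0, f x := by
  have h_abs : ∫⁻ x in Ioi 0, f |x| = ∫⁻ x in Ioi 0, f x :=
    setLIntegral_congr_fun measurableSet_Ioi fun x hx => by rw [abs_of_pos hx]
  have h_neg : ∫⁻ x in Iio 0, f |x| = ∫⁻ x in Ioi 0, f x := by
    have := (Measure.measurePreserving_neg volume).setLIntegral_comp_emb
      (Homeomorph.neg ℝ).measurableEmbedding (fun x => f |x|) (Ioi 0)
    simp only [abs_neg, image_neg_Ioi, neg_zero] at this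
    rw [← this, h_abs]
  rw [← lintegral_add_compl _ measurableSet_Iio, compl_Iio,
    Measure.restrict_congr_set Ioi_ae_eq_Ici.symm, h_neg, h_abs, two_mul]

lemma setLIntegral_preimage_abs {s : Set ℝ} (hs : MeasurableSet s) (f : ℝ → ℝ≥0∞) :
    ∫⁻ x in abs ⁻¹' s, f |x| = 2 * ∫⁻ x in s ∩ Ioi 0, f x := by
  rw [← lintegral_indicator (measurable_abs hs)]
  have : (abs ⁻¹' s).indicator (fun x => f |x|) = fun x => s.indicator f |x| :=
    funext fun x => indicator_comp_right (g := f) abs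
  rw [this, lintegral_comp_abs, lintegral_indicator hs, Measure.restrict_restrict hs]

lemma setLIntegral_abs_rpow_of_abs_le {r R : ℝ} (hr : -1 < r) (hR : 0 ≤ R) :
    ∫⁻ x in {x : ℝ | |x| ≤ R}, ENNReal.ofReal (|x| ^ r)
      = ENNReal.ofReal (2 * R ^ (r + 1) / (r + 1)) := by
  have h_int : IntegrableOn (fun x : ℝ => x ^ r) (Ioc 0 R) :=
    (intervalIntegrable_iff_integrableOn_Ioc_of_le hR).1
      (intervalIntegral.intervalIntegrable_rpow' hr)
  have h_val : ∫ x in Ioc 0 R, x ^ r = R ^ (r + 1) / (r + 1) := by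
    rw [← intervalIntegral.integral_of_le hR, integral_rpow (Or.inl hr),
      Real.zero_rpow (by linarith), sub_zero]
  have h_nonneg : 0 ≤ᵐ[volume.restrict (Ioc 0 R)] fun x : ℝ => x ^ r :=
    (ae_restrict_iff' measurableSet_Ioc).2 (.of_forall fun x hx => Real.rpow_nonneg hx.1.le r)
  rw [show {x : ℝ | |x| ≤ R} = abs ⁻¹' Iic R from rfl,
    setLIntegral_preimage_abs measurableSet_Iic (fun x => ENNReal.ofReal (x ^ r)),
    Iic_inter_Ioi, ← ofReal_integral_eq_lintegral_ofReal h_int h_nonneg, h_val, mul_div_assoc,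
    ENNReal.ofReal_mul zero_le_two, ENNReal.ofReal_ofNat]

lemma setLIntegral_abs_rpow_of_le_abs {r a : ℝ} (hr : r < -1) (ha : 0 < a) :
    ∫⁻ x in {x : ℝ | a ≤ |x|}, ENNReal.ofReal (|x| ^ r)
      = ENNReal.ofReal (2 * a ^ (r + 1) / -(r + 1)) := by
  have h_int : IntegrableOn (fun x : ℝ => x ^ r) (Ioi a) :=
    integrableOn_Ioi_rpow_of_lt hr ha
  have h_nonneg : 0 ≤ᵐ[volume.restrict (Ioi a)] fun x : ℝ => x ^ r :=
    (ae_restrict_iff' measurableSet_Ioi).2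
      (.of_forall fun x hx => Real.rpow_nonneg (ha.trans hx).le r)
  rw [show {x : ℝ | a ≤ |x|} = abs ⁻¹' Ici a from rfl,
    setLIntegral_preimage_abs measurableSet_Ici (fun x => ENNReal.ofReal (x ^ r)),
    inter_eq_left.2 (Ici_subset_Ioi.2 ha), Measure.restrict_congr_set Ioi_ae_eq_Ici.symm,
    ← ofReal_integral_eq_lintegral_ofReal h_int h_nonneg, integral_Ioi_rpow_of_lt hr ha,
    mul_div_assoc, ENNReal.ofReal_mul zero_le_two, ENNReal.ofReal_ofNat, neg_div, div_neg]

noncomputable def kernelNT (T β : ℝ) (K₂ : ℝ → ℝ → ℝ) (τ t' : ℝ) : ℝ :=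
  if 1/T < |t'| ∧ |t'| ≤ β * |τ| * T then
    |τ| ^ ((1:ℝ)/2) / |t'| ^ ((3:ℝ)/2) * |K₂ τ t'| else 0

section kernelNT

variable {T β C : ℝ} {K₂ : ℝ → ℝ → ℝ} {τ t' : ℝ}

lemma ofReal_kernelNT_le_of_le_div (hT : 0 < T) (hC : 0 ≤ C)
    (hK : |K₂ τ t'| ≤ C * (|t'| / |τ|)) :
    ENNReal.ofReal (kernelNT T β K₂ τ t') ≤ ENNReal.ofReal (C * |τ| ^ (-(1/2 : ℝ))) *
      {t | |t| ≤ β * |τ| * T}.indicator (fun t => ENNReal.ofReal (|t| ^ (-(1/2 : ℝ)))) t' := by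
  unfold kernelNT
  split_ifs with h
  · have ht : 0 < |t'| := (one_div_pos.2 hT).trans h.1
    have hτ : 0 < |τ| := (abs_nonneg τ).lt_of_ne fun h0 => by rw [← h0] at h; linarith [h.2]
    rw [indicator_of_mem (show t' ∈ {t | |t| ≤ β * |τ| * T} from h.2),
      ← ENNReal.ofReal_mul (by positivity)]
    refine ENNReal.ofReal_le_ofReal ?_
    calc |τ| ^ ((1:ℝ)/2) / |t'| ^ ((3:ℝ)/2) * |K₂ τ t'|
        ≤ |τ| ^ ((1:ℝ)/2) / |t'| ^ ((3:ℝ)/2) * (C * (|t'| / |τ|)) := by gcongr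
      _ = C * (|τ| ^ ((1:ℝ)/2) / |τ| ^ (1:ℝ)) * (|t'| ^ (1:ℝ) / |t'| ^ ((3:ℝ)/2)) := by
        rw [Real.rpow_one, Real.rpow_one]; ring
      _ = C * |τ| ^ (-(1/2 : ℝ)) * |t'| ^ (-(1/2 : ℝ)) := by
        rw [← Real.rpow_sub hτ, ← Real.rpow_sub ht]; norm_num
  · simp

lemma ofReal_kernelNT_le_of_le_div_sq (hT : 0 < T) (hβ : 0 < β) (hC : 0 ≤ C)
    (hK : |K₂ τ t'| ≤ C * (|t'| ^ 2 / |τ| ^ 2)) :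
    ENNReal.ofReal (kernelNT T β K₂ τ t') ≤ ENNReal.ofReal (C * |t'| ^ (1/2 : ℝ)) *
      {τ | |t'| / (β * T) ≤ |τ|}.indicator (fun τ => ENNReal.ofReal (|τ| ^ (-(3/2 : ℝ)))) τ := by
  unfold kernelNT
  split_ifs with h
  · have ht : 0 < |t'| := (one_div_pos.2 hT).trans h.1
    have hτ : 0 < |τ| := (abs_nonneg τ).lt_of_ne fun h0 => by rw [← h0] at h; linarith [h.2]
    have h_mem : |t'| / (β * T) ≤ |τ| := by
      rw [div_le_iff₀ (by positivity)]; linarith [h.2]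
    rw [indicator_of_mem (show τ ∈ {τ | |t'| / (β * T) ≤ |τ|} from h_mem),
      ← ENNReal.ofReal_mul (by positivity)]
    refine ENNReal.ofReal_le_ofReal ?_
    calc |τ| ^ ((1:ℝ)/2) / |t'| ^ ((3:ℝ)/2) * |K₂ τ t'|
        ≤ |τ| ^ ((1:ℝ)/2) / |t'| ^ ((3:ℝ)/2) * (C * (|t'| ^ 2 / |τ| ^ 2)) := by gcongr
      _ = C * (|t'| ^ (2:ℝ) / |t'| ^ ((3:ℝ)/2)) * (|τ| ^ ((1:ℝ)/2) / |τ| ^ (2:ℝ)) := by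
        rw [Real.rpow_two, Real.rpow_two]; ring
      _ = C * |t'| ^ (1/2 : ℝ) * |τ| ^ (-(3/2 : ℝ)) := by
        rw [← Real.rpow_sub hτ, ← Real.rpow_sub ht]; norm_num
  · simp

lemma lintegral_kernelNT_le (hT : 0 < T) (hβ : 0 ≤ β) (hC : 0 ≤ C) (hτ : τ ≠ 0)
    (hK : ∀ t', |K₂ τ t'| ≤ C * (|t'| / |τ|)) :
    ∫⁻ t', ENNReal.ofReal (kernelNT T β K₂ τ t')
      ≤ ENNReal.ofReal (4 * C * β ^ (1/2 : ℝ) * T ^ (1/2 : ℝ)) := by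
  have hτ' : 0 < |τ| := abs_pos.2 hτ
  calc ∫⁻ t', ENNReal.ofReal (kernelNT T β K₂ τ t')
      ≤ ∫⁻ t', ENNReal.ofReal (C * |τ| ^ (-(1/2 : ℝ))) *
          {t | |t| ≤ β * |τ| * T}.indicator (fun t => ENNReal.ofReal (|t| ^ (-(1/2 : ℝ)))) t' :=
        lintegral_mono fun t' => ofReal_kernelNT_le_of_le_div hT hC (hK t')
    _ = ENNReal.ofReal (C * |τ| ^ (-(1/2 : ℝ))) *
          ENNReal.ofReal (2 * (β * |τ| * T) ^ (-(1/2 : ℝ) + 1) / (-(1/2 : ℝ) + 1)) := by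
        rw [lintegral_const_mul' _ _ ofReal_ne_top,
          lintegral_indicator (measurableSet_le continuous_abs.measurable measurable_const),
          setLIntegral_abs_rpow_of_abs_le (by norm_num) (by positivity)]
    _ = ENNReal.ofReal (4 * C * β ^ (1/2 : ℝ) * T ^ (1/2 : ℝ)) := by
        rw [← ENNReal.ofReal_mul (by positivity)]
        congr 1
        rw [show -(1/2 : ℝ) + 1 = 1/2 by norm_num, Real.mul_rpow (by positivity) hT.le,
          Real.mul_rpow hβ hτ'.le, Real.rpow_neg hτ'.le]
        field_simp
        ring

lemma setLIntegral_kernelNT_le (hT : 0 < T) (hβ : 0 < β) (hC : 0 ≤ C) {S : Set ℝ}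
    (hS : MeasurableSet S) (hK : ∀ τ ∈ S, |K₂ τ t'| ≤ C * (|t'| ^ 2 / |τ| ^ 2)) :
    ∫⁻ τ in S, ENNReal.ofReal (kernelNT T β K₂ τ t')
      ≤ ENNReal.ofReal (4 * C * β ^ (1/2 : ℝ) * T ^ (1/2 : ℝ)) := by
  rcases eq_or_ne t' 0 with rfl | ht
  · simp [kernelNT]
  have ht' : 0 < |t'| := abs_pos.2 ht
  calc ∫⁻ τ in S, ENNReal.ofReal (kernelNT T β K₂ τ t')
      ≤ ∫⁻ τ in S, ENNReal.ofReal (C * |t'| ^ (1/2 : ℝ)) *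
          {τ | |t'| / (β * T) ≤ |τ|}.indicator (fun τ => ENNReal.ofReal (|τ| ^ (-(3/2 : ℝ)))) τ :=
        setLIntegral_mono' hS fun τ hτ => ofReal_kernelNT_le_of_le_div_sq hT hβ hC (hK τ hτ)
    _ ≤ ∫⁻ τ, ENNReal.ofReal (C * |t'| ^ (1/2 : ℝ)) *
          {τ | |t'| / (β * T) ≤ |τ|}.indicator (fun τ => ENNReal.ofReal (|τ| ^ (-(3/2 : ℝ)))) τ :=
        setLIntegral_le_lintegral _ _
    _ = ENNReal.ofReal (C * |t'| ^ (1/2 : ℝ)) *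
          ENNReal.ofReal (2 * (|t'| / (β * T)) ^ (-(3/2 : ℝ) + 1) / -(-(3/2 : ℝ) + 1)) := by
        rw [lintegral_const_mul' _ _ ofReal_ne_top,
          lintegral_indicator (measurableSet_le measurable_const continuous_abs.measurable),
          setLIntegral_abs_rpow_of_le_abs (by norm_num) (by positivity)]
    _ = ENNReal.ofReal (4 * C * β ^ (1/2 : ℝ) * T ^ (1/2 : ℝ)) := by
        rw [← ENNReal.ofReal_mul (by positivity)]
        congr 1
        rw [show -(3/2 : ℝ) + 1 = -(1/2) by norm_num, Real.rpow_neg (by positivity),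
          Real.div_rpow ht'.le (by positivity), Real.mul_rpow hβ.le hT.le]
        field_simp
        ring

end kernelNT

/-- Schur-type kernel bounds for
`N_T(τ,t') = (|τ|^{1/2}/|t'|^{3/2}) |K₂(T,τ,t')| χ_{1/T < |t'| ≤ β|τ|T}` on `|τ| > 1/2`,
assuming `|K₂| ≤ C min(|t'|/|τ|, |t'|²/|τ|²)`: both the `t'`-integrals (uniformly in
`τ`, `|τ| > 1/2`) and the `τ`-integrals over `{|τ| > 1/2}` (uniformly in `t'`) are
bounded by `C' C β^{1/2} T^{1/2}`. -/
theorem stmt11 :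
    ∃ C' > 0, ∀ (T β C : ℝ), 0 < β → 0 < C → Real.sqrt 2 / Real.sqrt β ≤ T →
      ∀ K₂ : ℝ → ℝ → ℝ, Measurable (Function.uncurry K₂) →
      (∀ τ t' : ℝ, 1/2 < |τ| →
          |K₂ τ t'| ≤ C * min (|t'| / |τ|) (|t'| ^ 2 / |τ| ^ 2)) →
      (∀ τ : ℝ, 1/2 < |τ| →
          (∫⁻ t' : ℝ, ENNReal.ofReal
              (if 1/T < |t'| ∧ |t'| ≤ β * |τ| * T then
                |τ| ^ ((1:ℝ)/2) / |t'| ^ ((3:ℝ)/2) * |K₂ τ t'| else 0))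
            ≤ ENNReal.ofReal (C' * C * β ^ ((1:ℝ)/2) * T ^ ((1:ℝ)/2))) ∧
      (∀ t' : ℝ,
          (∫⁻ τ in {τ : ℝ | 1/2 < |τ|}, ENNReal.ofReal
              (if 1/T < |t'| ∧ |t'| ≤ β * |τ| * T then
                |τ| ^ ((1:ℝ)/2) / |t'| ^ ((3:ℝ)/2) * |K₂ τ t'| else 0))
            ≤ ENNReal.ofReal (C' * C * β ^ ((1:ℝ)/2) * T ^ ((1:ℝ)/2))) := by
  refine ⟨4, by norm_num, fun T β C hβ hC hT K₂ _ hK => ?_⟩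
  have hT₀ : 0 < T := lt_of_lt_of_le (by positivity) hT
  refine ⟨fun τ hτ => ?_, fun t' => ?_⟩
  · refine lintegral_kernelNT_le hT₀ hβ.le hC.le (abs_pos.1 (by linarith)) fun t' => ?_
    exact (hK τ t' hτ).trans (mul_le_mul_of_nonneg_left (min_le_left _ _) hC.le)
  · refine setLIntegral_kernelNT_le hT₀ hβ hC.le
      (measurableSet_lt measurable_const continuous_abs.measurable) fun τ hτ => ?_
    exact (hK τ t' hτ).trans (mul_le_mul_of_nonneg_left (min_le_right _ _) hC.le)
end
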